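/- arXiv:math/0511547 — 4 statements merged into one kernel-verified Lean document; each statement's English description precedes it below -/
import Mathlib

section
/- Suppose d, m, n, r are integers with n ≥ 2, m ≥ 1, d ≥ 1, m = n·k + r with 0 ≤ r < n, satisfying d²·n ≤ m² and binom(d+2, 2) − 1 ≥ ((m − r)/n + 1)·((m + r)/2). Then n ≤ 9. -/
/-!
Writing `m = n k + r`, the dimension hypothesis says `(k + 1)(m + r) ≤ d² + 3d`. Since
`n (k + 1) = m - r + n` and `r² ≤ n r`, multiplying by `n` gives `m² + n m ≤ n (d² + 3d)`; together
with `d² n ≤ m²` this forces `m ≤ 3d`, and then `d² n ≤ m² ≤ 9 d²` gives `n ≤ 9`.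
-/

lemma cast_choose_two_add_two_sub_one (d : ℕ) :
    ((d + 2).choose 2 : ℚ) - 1 = ((d ^ 2 + 3 * d : ℕ) : ℚ) / 2 := by
  rw [Nat.cast_choose_two]
  push_cast
  ring

lemma succ_mul_add_le_of_choose_two {d m n r k : ℕ} (hn : 0 < n) (hmk : m = n * k + r)
    (hdim : ((d + 2).choose 2 : ℚ) - 1 ≥ (((m : ℚ) - r) / n + 1) * (((m : ℚ) + r) / 2)) :
    (k + 1) * (m + r) ≤ d ^ 2 + 3 * d := by
  have hquot : ((m : ℚ) - r) / n = k := by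
    rw [hmk, div_eq_iff (by positivity)]
    push_cast
    ring
  rw [cast_choose_two_add_two_sub_one, hquot] at hdim
  have hdim' : (((k + 1) * (m + r) : ℕ) : ℚ) ≤ ((d ^ 2 + 3 * d : ℕ) : ℚ) := by
    push_cast at hdim ⊢
    linarith
  exact_mod_cast hdim'

/-- Expanding `n (k + 1) (m + r) = (m - r + n)(m + r) = m² - r² + n (m + r)` with `r² ≤ n r`. -/
lemma sq_add_mul_le_mul_succ_mul_add {n k r : ℕ} (hr : r ≤ n) :
    (n * k + r) ^ 2 + n * (n * k + r) ≤ n * ((k + 1) * (n * k + r + r)) := by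
  nlinarith [Nat.mul_le_mul_right r hr]

lemma le_three_mul_of_sq_add_mul_le {d m n : ℕ} (hn : 0 < n) (hses : d ^ 2 * n ≤ m ^ 2)
    (h : m ^ 2 + n * m ≤ n * (d ^ 2 + 3 * d)) : m ≤ 3 * d := by
  have : n * m ≤ n * (3 * d) := by nlinarith
  exact Nat.le_of_mul_le_mul_left this hn

theorem stmt_3_general (d m n r k : ℕ) (hd : 1 ≤ d)
    (hmk : m = n * k + r) (hr : r < n)
    (hses : d ^ 2 * n ≤ m ^ 2)
    (hdim : (((d + 2).choose 2 : ℚ)) - 1 ≥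
      (((m : ℚ) - r) / n + 1) * (((m : ℚ) + r) / 2)) :
    n ≤ 9 := by
  have hn : 0 < n := by omega
  have hdim' := succ_mul_add_le_of_choose_two hn hmk hdim
  have hm : m ≤ 3 * d := by
    refine le_three_mul_of_sq_add_mul_le hn hses ?_
    calc m ^ 2 + n * m ≤ n * ((k + 1) * (m + r)) := by
          subst hmk; exact sq_add_mul_le_mul_succ_mul_add hr.le
      _ ≤ n * (d ^ 2 + 3 * d) := Nat.mul_le_mul_left n hdim'
  have hd2 : 0 < d ^ 2 := by positivity
  have : d ^ 2 * n ≤ d ^ 2 * 9 := by nlinarith [Nat.pow_le_pow_left hm 2]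
  exact Nat.le_of_mul_le_mul_left this hd2

/-- Numerical core: if d²n ≤ m² and C(d+2,2) − 1 ≥ ((m−r)/n + 1)·((m+r)/2),
    where m = nk + r, 0 ≤ r < n, n ≥ 2, m ≥ 1, d ≥ 1, then n ≤ 9. -/
theorem stmt_3 (d m n r k : ℕ) (hn : 2 ≤ n) (hm : 1 ≤ m) (hd : 1 ≤ d)
    (hmk : m = n * k + r) (hr : r < n)
    (hses : d ^ 2 * n ≤ m ^ 2)
    (hdim : (((d + 2).choose 2 : ℚ)) - 1 ≥
      (((m : ℚ) - r) / n + 1) * (((m : ℚ) + r) / 2)) :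
    n ≤ 9 :=
  stmt_3_general d m n r k hd hmk hr hses hdim
end

section
/- Let d, m, n be integers with n ≥ 2, d ≥ 1, m ≥ 1 satisfying d² + 3d ≥ (m² − r²)/n + m + r (where m = nk + r, 0 ≤ r < n) and nd² ≤ m². Then 3d ≥ m and consequently 9d² ≥ nd², so n ≤ 9. -/
/-- If d² + 3d ≥ (m² − r²)/n + m + r (with m = nk + r, 0 ≤ r < n) and
    nd² ≤ m², then 3d ≥ m, hence 9d² ≥ nd², so n ≤ 9. -/
theorem stmt_4 (d m n k r : ℕ) (hn : 2 ≤ n) (hd : 1 ≤ d) (hm : 1 ≤ m)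
    (hmk : m = n * k + r) (hr : r < n)
    (h1 : ((d : ℚ) ^ 2 + 3 * d) ≥ (((m : ℚ) ^ 2 - (r : ℚ) ^ 2) / n) + m + r)
    (h2 : n * d ^ 2 ≤ m ^ 2) :
    3 * d ≥ m ∧ 9 * d ^ 2 ≥ n * d ^ 2 ∧ n ≤ 9 := by
  have hnQ : (0:ℚ) < (n:ℚ) := by exact_mod_cast Nat.lt_of_lt_of_le Nat.zero_lt_two hn
  have h2q : (n:ℚ) * (d:ℚ)^2 ≤ (m:ℚ)^2 := by exact_mod_cast h2
  have hrq : (r:ℚ) ≤ (n:ℚ) := by exact_mod_cast hr.le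
  have hr0 : (0:ℚ) ≤ (r:ℚ) := by positivity
  have h1' : ((m:ℚ)^2 - (r:ℚ)^2) + ((m:ℚ) + (r:ℚ)) * n ≤ ((d:ℚ)^2 + 3*d) * n := by
    have := mul_le_mul_of_nonneg_right h1 hnQ.le
    calc ((m:ℚ)^2 - (r:ℚ)^2) + ((m:ℚ) + (r:ℚ)) * n
        = ((((m : ℚ) ^ 2 - (r : ℚ) ^ 2) / n) + m + r) * n := by field_simp; ring
      _ ≤ _ := this
  have h3q : (m:ℚ) ≤ 3 * (d:ℚ) := by nlinarith [mul_nonneg hr0 (sub_nonneg.mpr hrq)]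
  have h3 : m ≤ 3 * d := by exact_mod_cast h3q
  refine ⟨h3, ?_, ?_⟩
  · calc n * d ^ 2 ≤ m ^ 2 := h2
      _ ≤ (3*d)^2 := Nat.pow_le_pow_left h3 2
      _ = 9 * d ^ 2 := by ring
  · have hd2 : 0 < d ^ 2 := by positivity
    have : n * d ^ 2 ≤ 9 * d ^ 2 := le_trans h2 (by calc m^2 ≤ (3*d)^2 := Nat.pow_le_pow_left h3 2
      _ = 9 * d^2 := by ring)
    exact Nat.le_of_mul_le_mul_right (by simpa [Nat.mul_comm] using this) hd2
end

section
/- There is no plane cubic curve C (degree 3 affine curve) passing through the origin with multiplicity at least 2 and meeting the curve B: y = x^{8b} + x⁴ + x² (for b ≥ 1) with intersection multiplicity at least 9 at the origin. -/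
open Polynomial

namespace Stmt11Aux

open MvPolynomial

noncomputable def md (i j : ℕ) : Fin 2 →₀ ℕ := Finsupp.single 0 i + Finsupp.single 1 j

lemma md_apply0 (i j : ℕ) : md i j 0 = i := by simp [md]

lemma md_apply1 (i j : ℕ) : md i j 1 = j := by
  simp [md, Finsupp.single_apply]

lemma md_eq {d : Fin 2 →₀ ℕ} {i j : ℕ} : md i j = d ↔ d 0 = i ∧ d 1 = j := by
  constructor
  · rintro rfl; exact ⟨md_apply0 i j, md_apply1 i j⟩
  · rintro ⟨h0, h1⟩
    ext t
    fin_cases t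
    · simp [md, Finsupp.single_apply, h0]
    · simp [md, Finsupp.single_apply, h1]

lemma supp_sum (d : Fin 2 →₀ ℕ) : ∑ i ∈ d.support, d i = d 0 + d 1 := by
  have h : ∑ i ∈ d.support, d i = ∑ i : Fin 2, d i :=
    Finset.sum_subset (Finset.subset_univ _)
      (fun x _ hx => Finsupp.notMem_support_iff.mp hx)
  rw [h, Fin.sum_univ_two]

lemma decomp (f : MvPolynomial (Fin 2) ℂ) (hdeg : f.totalDegree ≤ 3)
    (hmult : ∀ d : Fin 2 →₀ ℕ, d 0 + d 1 < 2 → MvPolynomial.coeff d f = 0) :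
    f = monomial (md 2 0) (coeff (md 2 0) f) + monomial (md 1 1) (coeff (md 1 1) f)
      + monomial (md 0 2) (coeff (md 0 2) f) + monomial (md 3 0) (coeff (md 3 0) f)
      + monomial (md 2 1) (coeff (md 2 1) f) + monomial (md 1 2) (coeff (md 1 2) f)
      + monomial (md 0 3) (coeff (md 0 3) f) := by
  apply MvPolynomial.ext
  intro d
  by_cases h20 : d 0 = 2 ∧ d 1 = 0
  · obtain rfl : md 2 0 = d := md_eq.mpr h20
    simp [MvPolynomial.coeff_monomial, md_eq, md_apply0, md_apply1]
  by_cases h11 : d 0 = 1 ∧ d 1 = 1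
  · obtain rfl : md 1 1 = d := md_eq.mpr h11
    simp [MvPolynomial.coeff_monomial, md_eq, md_apply0, md_apply1]
  by_cases h02 : d 0 = 0 ∧ d 1 = 2
  · obtain rfl : md 0 2 = d := md_eq.mpr h02
    simp [MvPolynomial.coeff_monomial, md_eq, md_apply0, md_apply1]
  by_cases h30 : d 0 = 3 ∧ d 1 = 0
  · obtain rfl : md 3 0 = d := md_eq.mpr h30
    simp [MvPolynomial.coeff_monomial, md_eq, md_apply0, md_apply1]
  by_cases h21 : d 0 = 2 ∧ d 1 = 1
  · obtain rfl : md 2 1 = d := md_eq.mpr h21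
    simp [MvPolynomial.coeff_monomial, md_eq, md_apply0, md_apply1]
  by_cases h12 : d 0 = 1 ∧ d 1 = 2
  · obtain rfl : md 1 2 = d := md_eq.mpr h12
    simp [MvPolynomial.coeff_monomial, md_eq, md_apply0, md_apply1]
  by_cases h03 : d 0 = 0 ∧ d 1 = 3
  · obtain rfl : md 0 3 = d := md_eq.mpr h03
    simp [MvPolynomial.coeff_monomial, md_eq, md_apply0, md_apply1]
  · have hz : coeff d f = 0 := by
      rcases (by omega : d 0 + d 1 < 2 ∨ 3 < d 0 + d 1) with h | h
      · exact hmult d h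
      · exact MvPolynomial.coeff_eq_zero_of_totalDegree_lt
          (by rw [supp_sum]; omega)
    simp [MvPolynomial.coeff_monomial, md_eq, hz, h20, h11, h02, h30, h21, h12, h03]

lemma aeval_md (v : Fin 2 → Polynomial ℂ) (i j : ℕ) (a : ℂ) :
    MvPolynomial.aeval v (monomial (md i j) a) = Polynomial.C a * v 0 ^ i * v 1 ^ j := by
  have h : (monomial (md i j) a : MvPolynomial (Fin 2) ℂ)
      = MvPolynomial.C a * MvPolynomial.X 0 ^ i * MvPolynomial.X 1 ^ j := by
    rw [MvPolynomial.X_pow_eq_monomial, MvPolynomial.X_pow_eq_monomial,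
      MvPolynomial.C_mul_monomial, MvPolynomial.monomial_mul, md]
    simp
  rw [h]
  simp

end Stmt11Aux

set_option maxHeartbeats 2000000 in
open Stmt11Aux in
/-- There is no plane curve of degree ≤ 3 with a point of multiplicity ≥ 2 at
    the origin meeting the curve y = x^{8b} + x⁴ + x² with intersection
    multiplicity ≥ 9 at the origin.  Multiplicity ≥ 2 means all monomial
    coefficients of total degree < 2 vanish; the intersection multiplicity is
    the order of vanishing at 0 of f(x, x^{8b} + x⁴ + x²), i.e. divisibility
    by X⁹ (variable 0 is x, variable 1 is y). -/
theorem stmt_11 (b : ℕ) (hb : 1 ≤ b) (f : MvPolynomial (Fin 2) ℂ)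
    (hf0 : f ≠ 0) (hdeg : f.totalDegree ≤ 3)
    (hmult : ∀ d : Fin 2 →₀ ℕ, d 0 + d 1 < 2 → MvPolynomial.coeff d f = 0) :
    ¬ ((X : Polynomial ℂ) ^ 9 ∣
        MvPolynomial.aeval
          ![(X : Polynomial ℂ), X ^ (8 * b) + X ^ 4 + X ^ 2] f) := by
  obtain ⟨k, rfl⟩ : ∃ k, b = k + 1 := ⟨b - 1, by omega⟩
  intro hdvd
  have hf := decomp f hdeg hmult
  set a20 := MvPolynomial.coeff (md 2 0) f with ha20
  set a11 := MvPolynomial.coeff (md 1 1) f with ha11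
  set a02 := MvPolynomial.coeff (md 0 2) f with ha02
  set a30 := MvPolynomial.coeff (md 3 0) f with ha30
  set a21 := MvPolynomial.coeff (md 2 1) f with ha21
  set a12 := MvPolynomial.coeff (md 1 2) f with ha12
  set a03 := MvPolynomial.coeff (md 0 3) f with ha03
  rw [hf] at hdvd
  simp only [map_add, aeval_md, Matrix.cons_val_zero, Matrix.cons_val_one,
    Matrix.head_cons] at hdvd
  have hQ : (X : Polynomial ℂ) ^ 9 ∣
      (C a20 * X ^ 2 + C a11 * X ^ 3 + C a30 * X ^ 3
        + C a02 * X ^ 4 + C a21 * X ^ 4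
        + C a11 * X ^ 5 + C a12 * X ^ 5
        + C a02 * X ^ 6 + C a02 * X ^ 6 + C a21 * X ^ 6 + C a03 * X ^ 6
        + C a12 * X ^ 7 + C a12 * X ^ 7
        + C a02 * X ^ 8 + C a03 * X ^ 8 + C a03 * X ^ 8 + C a03 * X ^ 8) := by
    have h1 : (C a20 * X ^ 2 + C a11 * X ^ 3 + C a30 * X ^ 3
        + C a02 * X ^ 4 + C a21 * X ^ 4
        + C a11 * X ^ 5 + C a12 * X ^ 5
        + C a02 * X ^ 6 + C a02 * X ^ 6 + C a21 * X ^ 6 + C a03 * X ^ 6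
        + C a12 * X ^ 7 + C a12 * X ^ 7
        + C a02 * X ^ 8 + C a03 * X ^ 8 + C a03 * X ^ 8 + C a03 * X ^ 8 : Polynomial ℂ)
        = (C a20 * X ^ 2 * (X ^ (8 * (k + 1)) + X ^ 4 + X ^ 2) ^ 0
          + C a11 * X ^ 1 * (X ^ (8 * (k + 1)) + X ^ 4 + X ^ 2) ^ 1
          + C a02 * X ^ 0 * (X ^ (8 * (k + 1)) + X ^ 4 + X ^ 2) ^ 2
          + C a30 * X ^ 3 * (X ^ (8 * (k + 1)) + X ^ 4 + X ^ 2) ^ 0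
          + C a21 * X ^ 2 * (X ^ (8 * (k + 1)) + X ^ 4 + X ^ 2) ^ 1
          + C a12 * X ^ 1 * (X ^ (8 * (k + 1)) + X ^ 4 + X ^ 2) ^ 2
          + C a03 * X ^ 0 * (X ^ (8 * (k + 1)) + X ^ 4 + X ^ 2) ^ 3)
        - X ^ 9 * (C a11 * X ^ (8 * k)
          + C a21 * X ^ (8 * k + 1)
          + C a02 * (X ^ (16 * k + 7) + 2 * X ^ (8 * k + 3) + 2 * X ^ (8 * k + 1))
          + C a12 * (1 + X ^ (16 * k + 8) + 2 * X ^ (8 * k + 4) + 2 * X ^ (8 * k + 2))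
          + C a03 * (X ^ 3 + 3 * X
              + X ^ (24 * k + 15) + 3 * X ^ (16 * k + 11) + 3 * X ^ (16 * k + 9)
              + 3 * X ^ (8 * k + 7) + 6 * X ^ (8 * k + 5) + 3 * X ^ (8 * k + 3))) := by
      ring
    rw [h1]
    exact dvd_sub hdvd (dvd_mul_right _ _)
  have hco := Polynomial.X_pow_dvd_iff.mp hQ
  have e2 := hco 2 (by norm_num)
  have e3 := hco 3 (by norm_num)
  have e4 := hco 4 (by norm_num)
  have e5 := hco 5 (by norm_num)
  have e6 := hco 6 (by norm_num)
  have e7 := hco 7 (by norm_num)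
  have e8 := hco 8 (by norm_num)
  simp only [coeff_add, coeff_C_mul, coeff_X_pow] at e2 e3 e4 e5 e6 e7 e8
  norm_num at e2 e3 e4 e5 e6 e7 e8
  have z20 : a20 = 0 := by linear_combination e2
  have z12 : a12 = 0 := e7
  have z11 : a11 = 0 := by linear_combination e5 - e7
  have z30 : a30 = 0 := by linear_combination e3 - e5 + e7
  have z03 : a03 = 0 := by linear_combination (1/2 : ℂ) * (e8 - e6 + e4)
  have z02 : a02 = 0 := by linear_combination e8 - (3/2 : ℂ) * (e8 - e6 + e4)
  have z21 : a21 = 0 := by linear_combination e4 - e8 + (3/2 : ℂ) * (e8 - e6 + e4)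
  apply hf0
  rw [hf, z20, z11, z02, z30, z21, z12, z03]
  simp
end

section
/- Let n ≥ 2 and let g be a power series in x, y whose nonzero monomials x^p y^q all satisfy p + nq ≥ m, with equality for some nonzero monomial, m ≥ 1. Define inductively m_{k+1} as the multiplicity (minimal p+q of a nonzero monomial) of the k-th strict transform under successive blowups x = x₁, y = x₁y₁ as above. Then m = m₁ + m₂ + ... + m_n. -/
/-- Proposition (clusters), combinatorial content: if every nonzero monomial
    x^p y^q of g satisfies p + nq ≥ m with equality attained (m ≥ 1, n ≥ 2),
    and m_{k+1} is the multiplicity of the k-th successive strict transform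
    of g under the blowups x = x₁, y = x₁y₁, then m = m₁ + ⋯ + m_n. -/
theorem stmt_14 (n m : ℕ) (hn : 2 ≤ n) (hm : 1 ≤ m) (a : ℕ × ℕ → ℂ)
    (hsupp : ∀ p q, a (p, q) ≠ 0 → p + n * q ≥ m)
    (hattain : ∃ p q, a (p, q) ≠ 0 ∧ p + n * q = m)
    (A : ℕ → ℕ × ℕ → ℂ) (mu : ℕ → ℕ)
    (hA0 : A 0 = a)
    (hmu : ∀ k, mu k = sInf {t | ∃ p q, A k (p, q) ≠ 0 ∧ t = p + q})
    (hAsucc : ∀ k p₁ q, A (k + 1) (p₁, q) =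
      if q ≤ p₁ + mu k then A k (p₁ + mu k - q, q) else 0) :
    m = ∑ k ∈ Finset.range n, mu k := by
  classical
  obtain ⟨P₀, Q₀, hP₀, hPQ₀⟩ := hattain
  set S : ℕ → ℕ := fun k => ∑ j ∈ Finset.range k, mu j with hS
  set g : ℕ → Set ℕ := fun k => {t | ∃ P q, a (P, q) ≠ 0 ∧ t = P + k * q} with hg
  have hgne : ∀ k, (g k).Nonempty := fun k => ⟨P₀ + k * Q₀, P₀, Q₀, hP₀, rfl⟩
  have hS0 : S 0 = 0 := by simp [hS]
  have hSsucc : ∀ k, S (k + 1) = S k + mu k := by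
    intro k; simp [hS, Finset.sum_range_succ]
  -- Key step: the multiplicity after k blowups, shifted by S k, is the minimum
  -- of P + (k+1)q over the support of a.
  have step : ∀ k, (∀ P q, a (P, q) ≠ 0 → S k ≤ P + k * q) →
      (∀ p q, A k (p, q) ≠ 0 ↔ ∃ P, a (P, q) ≠ 0 ∧ P + k * q = p + S k) →
      mu k + S k = sInf (g (k + 1)) := by
    intro k hlb hiff
    have hsetne : {t | ∃ p q, A k (p, q) ≠ 0 ∧ t = p + q}.Nonempty := by
      refine ⟨P₀ + k * Q₀ - S k + Q₀, P₀ + k * Q₀ - S k, Q₀, ?_, rfl⟩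
      rw [hiff]
      have := hlb P₀ Q₀ hP₀
      exact ⟨P₀, hP₀, by omega⟩
    apply le_antisymm
    · obtain ⟨P, q, hPa, ht⟩ := Nat.sInf_mem (hgne (k + 1))
      have h1 : S k ≤ P + k * q := hlb P q hPa
      have hAk : A k (P + k * q - S k, q) ≠ 0 := by
        rw [hiff]; exact ⟨P, hPa, by omega⟩
      have h2 : mu k ≤ P + k * q - S k + q := by
        rw [hmu k]; exact Nat.sInf_le ⟨_, _, hAk, rfl⟩
      have hexp : (k + 1) * q = k * q + q := by ring
      rw [hexp] at ht
      omega
    · have hmem : mu k ∈ {t | ∃ p q, A k (p, q) ≠ 0 ∧ t = p + q} := by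
        rw [hmu k]; exact Nat.sInf_mem hsetne
      obtain ⟨p, q, hAk, ht⟩ := hmem
      obtain ⟨P, hPa, hPe⟩ := (hiff p q).mp hAk
      refine Nat.sInf_le ⟨P, q, hPa, ?_⟩
      have hexp : (k + 1) * q = k * q + q := by ring
      rw [hexp]
      omega
  -- Main invariant by induction.
  have inv : ∀ k, (∀ P q, a (P, q) ≠ 0 → S k ≤ P + k * q) ∧
      (∀ p q, A k (p, q) ≠ 0 ↔ ∃ P, a (P, q) ≠ 0 ∧ P + k * q = p + S k) := by
    intro k
    induction k with
    | zero =>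
      constructor
      · intro P q _; simp [hS0]
      · intro p q
        rw [hA0]
        constructor
        · intro h; exact ⟨p, h, by simp [hS0]⟩
        · rintro ⟨P, hPa, hPe⟩
          have : P = p := by
            simp [hS0] at hPe; omega
          rwa [this] at hPa
    | succ k ih =>
      obtain ⟨ih1, ih2⟩ := ih
      have hstep := step k ih1 ih2
      have hS1 : S (k + 1) = S k + mu k := hSsucc k
      constructor
      · intro P q hPa
        have : sInf (g (k + 1)) ≤ P + (k + 1) * q := Nat.sInf_le ⟨P, q, hPa, rfl⟩
        omega
      · intro p q
        have hexp : (k + 1) * q = k * q + q := by ring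
        rw [hAsucc]
        by_cases hq : q ≤ p + mu k
        · rw [if_pos hq, ih2]
          constructor
          · rintro ⟨P, hPa, hPe⟩
            exact ⟨P, hPa, by rw [hexp]; omega⟩
          · rintro ⟨P, hPa, hPe⟩
            rw [hexp] at hPe
            exact ⟨P, hPa, by omega⟩
        · rw [if_neg hq]
          constructor
          · intro h; exact absurd rfl h
          · rintro ⟨P, hPa, hPe⟩
            exfalso
            have h1 := ih1 P q hPa
            rw [hexp] at hPe
            omega
  -- Conclude: S n = sInf (g n) = m.
  obtain ⟨k', rfl⟩ : ∃ k', n = k' + 1 := ⟨n - 1, by omega⟩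
  obtain ⟨ih1, ih2⟩ := inv k'
  have hstep := step k' ih1 ih2
  have h1 : sInf (g (k' + 1)) ≤ m := Nat.sInf_le ⟨P₀, Q₀, hP₀, hPQ₀.symm⟩
  have h2 : m ≤ sInf (g (k' + 1)) := by
    obtain ⟨P, q, hPa, ht⟩ := Nat.sInf_mem (hgne (k' + 1))
    rw [ht]; exact hsupp P q hPa
  have hsum : (∑ k ∈ Finset.range (k' + 1), mu k) = S k' + mu k' := by
    simp [hS, Finset.sum_range_succ]
  omega
end
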